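/- The explicit field z_{k,ℓ,m} = (k + ℓω + mω²)³ - (k + ℓ + m), where ω = e^{2πi/3}, satisfies the cross-ratio equations with Δ1 = -3, Δ2 = -3ω², Δ3 = -3ω: for all k,ℓ,m ∈ ℤ, q(z_{k,ℓ,m}, z_{k+1,ℓ,m}, z_{k+1,ℓ,m-1}, z_{k,ℓ,m-1}) = Δ1/Δ3, q(z_{k,ℓ,m}, z_{k,ℓ,m+1}, z_{k,ℓ-1,m+1}, z_{k,ℓ-1,m}) = Δ3/Δ2, and q(z_{k,ℓ,m}, z_{k,ℓ+1,m}, z_{k-1,ℓ+1,m}, z_{k-1,ℓ,m}) = Δ2/Δ1, whenever the cross-ratio is defined. -/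

import Mathlib

/-!
Put `u = k + ℓω + mω²` and `s = k + ℓ + m`, so that `z = u³ - s`. Along every lattice edge
`(u' - u)³ = s' - s`, and then `z' - z = 3 (u' - u) u u'`, a discrete form of `dz = 3u² du`.
In the cross-ratio the vertex factors `u u'` cancel, so the cross-ratio of an elementary quad of
`z` is that of the corresponding parallelogram `u, u + a, u + a - b, u - b`, namely `a² / b²`.
-/

open Complex

section CrossRatio

variable {K : Type*} [Field K]

def crossRatio (z₁ z₂ z₃ z₄ : K) : K :=
  ((z₂ - z₁) * (z₄ - z₃)) / ((z₃ - z₂) * (z₁ - z₄))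

theorem crossRatio_parallelogram (u a b : K) :
    crossRatio u (u + a) (u + a - b) (u - b) = a ^ 2 / b ^ 2 := by
  rw [crossRatio, show (u + a - u) * (u - b - (u + a - b)) = -a ^ 2 by ring,
    show (u + a - b - (u + a)) * (u - (u - b)) = -b ^ 2 by ring, neg_div_neg_eq]

theorem cube_sub_sub_cube_sub {u u' s s' : K} (h : (u' - u) ^ 3 = s' - s) :
    (u' ^ 3 - s') - (u ^ 3 - s) = 3 * (u' - u) * u * u' := by
  linear_combination h

theorem crossRatio_cube_sub {u₁ u₂ u₃ u₄ s₁ s₂ s₃ s₄ : K}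
    (h₁₂ : (u₂ - u₁) ^ 3 = s₂ - s₁) (h₂₃ : (u₃ - u₂) ^ 3 = s₃ - s₂)
    (h₃₄ : (u₄ - u₃) ^ 3 = s₄ - s₃) (h₄₁ : (u₁ - u₄) ^ 3 = s₁ - s₄)
    (hz₁₂ : u₁ ^ 3 - s₁ ≠ u₂ ^ 3 - s₂) (hz₃₄ : u₃ ^ 3 - s₃ ≠ u₄ ^ 3 - s₄) :
    crossRatio (u₁ ^ 3 - s₁) (u₂ ^ 3 - s₂) (u₃ ^ 3 - s₃) (u₄ ^ 3 - s₄) =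
      crossRatio u₁ u₂ u₃ u₄ := by
  have hw₁₂ : 3 * (u₂ - u₁) * u₁ * u₂ ≠ 0 :=
    cube_sub_sub_cube_sub h₁₂ ▸ sub_ne_zero.mpr hz₁₂.symm
  have hw₃₄ : 3 * (u₄ - u₃) * u₃ * u₄ ≠ 0 :=
    cube_sub_sub_cube_sub h₃₄ ▸ sub_ne_zero.mpr hz₃₄.symm
  have hweight : 3 * u₁ * u₂ * (3 * u₃ * u₄) ≠ 0 := by
    simp only [mul_ne_zero_iff] at hw₁₂ hw₃₄ ⊢
    tauto
  rw [crossRatio, crossRatio, cube_sub_sub_cube_sub h₁₂, cube_sub_sub_cube_sub h₂₃,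
    cube_sub_sub_cube_sub h₃₄, cube_sub_sub_cube_sub h₄₁,
    ← mul_div_mul_right ((u₂ - u₁) * (u₄ - u₃)) ((u₃ - u₂) * (u₁ - u₄)) hweight]
  congr 1 <;> ring

theorem crossRatio_cube_sub_of_parallelogram {u₁ u₂ u₃ u₄ s₁ s₂ s₃ s₄ a b : K}
    (ha : a ^ 3 = 1) (hb : b ^ 3 = 1) (hu₂ : u₂ = u₁ + a) (hu₃ : u₃ = u₁ + a - b)
    (hu₄ : u₄ = u₁ - b) (hs₂ : s₂ = s₁ + 1) (hs₃ : s₃ = s₁) (hs₄ : s₄ = s₁ - 1)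
    (hz₁₂ : u₁ ^ 3 - s₁ ≠ u₂ ^ 3 - s₂) (hz₃₄ : u₃ ^ 3 - s₃ ≠ u₄ ^ 3 - s₄) :
    crossRatio (u₁ ^ 3 - s₁) (u₂ ^ 3 - s₂) (u₃ ^ 3 - s₃) (u₄ ^ 3 - s₄) = a ^ 2 / b ^ 2 := by
  subst hu₂ hu₃ hu₄ hs₂ hs₃ hs₄
  rw [crossRatio_cube_sub (by linear_combination ha) (by linear_combination -hb)
    (by linear_combination -ha) (by linear_combination hb) hz₁₂ hz₃₄, crossRatio_parallelogram]

end CrossRatio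

theorem cube_field_crossRatios :
    let ω : ℂ := Complex.exp (2 * Real.pi * Complex.I / 3)
    let z : ℤ → ℤ → ℤ → ℂ := fun k l m =>
      ((k : ℂ) + l * ω + m * ω ^ 2) ^ 3 - ((k : ℂ) + l + m)
    let q : ℂ → ℂ → ℂ → ℂ → ℂ := fun z1 z2 z3 z4 =>
      ((z2 - z1) * (z4 - z3)) / ((z3 - z2) * (z1 - z4))
    let Δ1 : ℂ := -3
    let Δ2 : ℂ := -3 * ω ^ 2
    let Δ3 : ℂ := -3 * ω
    ∀ k l m : ℤ,
      (Function.Injective ![z k l m, z (k+1) l m, z (k+1) l (m-1), z k l (m-1)] →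
        q (z k l m) (z (k+1) l m) (z (k+1) l (m-1)) (z k l (m-1)) = Δ1 / Δ3) ∧
      (Function.Injective ![z k l m, z k l (m+1), z k (l-1) (m+1), z k (l-1) m] →
        q (z k l m) (z k l (m+1)) (z k (l-1) (m+1)) (z k (l-1) m) = Δ3 / Δ2) ∧
      (Function.Injective ![z k l m, z k (l+1) m, z (k-1) (l+1) m, z (k-1) l m] →
        q (z k l m) (z k (l+1) m) (z (k-1) (l+1) m) (z (k-1) l m) = Δ2 / Δ1) := by
  intro ω z q Δ1 Δ2 Δ3 k l m
  have hω : ω ^ 3 = 1 := (Complex.isPrimitiveRoot_exp 3 (by norm_num)).pow_eq_one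
  have hω0 : ω ≠ 0 := by rintro h; simp [h] at hω
  have hω2 : (ω ^ 2) ^ 3 = 1 := by linear_combination (ω ^ 3 + 1) * hω
  have h₁ : (1 : ℂ) ^ 2 / (ω ^ 2) ^ 2 = Δ1 / Δ3 := by
    simp only [Δ1, Δ3]; field_simp; linear_combination -hω
  have h₂ : (ω ^ 2) ^ 2 / ω ^ 2 = Δ3 / Δ2 := by
    simp only [Δ2, Δ3]; field_simp; linear_combination hω
  have h₃ : ω ^ 2 / 1 ^ 2 = Δ2 / Δ1 := by
    simp only [Δ1, Δ2]; field_simp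
  refine ⟨fun hinj => ?_, fun hinj => ?_, fun hinj => ?_⟩
  · refine (crossRatio_cube_sub_of_parallelogram (one_pow 3) hω2 ?_ ?_ ?_ ?_ ?_ ?_
      (hinj.ne (by decide : (0 : Fin 4) ≠ 1)) (hinj.ne (by decide : (2 : Fin 4) ≠ 3))).trans h₁
    all_goals push_cast; ring
  · refine (crossRatio_cube_sub_of_parallelogram hω2 hω ?_ ?_ ?_ ?_ ?_ ?_
      (hinj.ne (by decide : (0 : Fin 4) ≠ 1)) (hinj.ne (by decide : (2 : Fin 4) ≠ 3))).trans h₂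
    all_goals push_cast; ring
  · refine (crossRatio_cube_sub_of_parallelogram hω (one_pow 3) ?_ ?_ ?_ ?_ ?_ ?_
      (hinj.ne (by decide : (0 : Fin 4) ≠ 1)) (hinj.ne (by decide : (2 : Fin 4) ≠ 3))).trans h₃
    all_goals push_cast; ring
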